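/- Let F be the free abelian group on ℤ and let the fusion ring of SU_q(2) (free abelian group on ½ℕ with SU(2) fusion rules) act on F by [n]·[r] = Σ_{i=0}^{2r} [n − 2r + 2i]. Then this defines a module structure over the fusion ring: the action is compatible with the SU(2) fusion rules [r]·[s] = Σ_{t=|r−s|}^{r+s, step 1} [t]. -/

import Mathlib

/-- The action of the irreducible spin `r = m/2` (encoded by the doubled spin `m ∈ ℕ`) of
`SU_q(2)` on the basis projective representation `[n]`, `n ∈ ℤ`:
`[n]·[r] = Σ_{i=0}^{2r} [n - 2r + 2i]`, as an element of the free abelian group on `ℤ`. -/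
noncomputable def actOn (n : ℤ) (m : ℕ) : ℤ →₀ ℤ :=
  ∑ i ∈ Finset.range (m + 1), Finsupp.single (n - (m : ℤ) + 2 * (i : ℤ)) (1 : ℤ)

/-- The extension of `actOn` by additivity to the free abelian group on `ℤ`. -/
noncomputable def actF (f : ℤ →₀ ℤ) (m : ℕ) : ℤ →₀ ℤ :=
  f.sum fun n c => c • actOn n m

/-!
Identify the free abelian group on `ℤ` with the Laurent polynomials `ℤ[T;T⁻¹]`, `[n] ↦ T^n`.
Then acting by the doubled spin `m` is multiplication by the character
`χ_m = T^{-m} + T^{2-m} + ⋯ + T^m`, so the module axiom is the Clebsch–Gordan identity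
`χ_m χ_{m'} = Σ_{i=0}^{m} χ_{m'-m+2i}` for `m ≤ m'`. Since `(T - T⁻¹) χ_k = T^{k+1} - T^{-(k+1)}`,
after multiplying by the non-zero-divisor `T - T⁻¹` both sides become the same sum of monomials.
-/

open LaurentPolynomial AddMonoidAlgebra Finset

/-- The character of the spin `m/2` representation of `SU(2)`. -/
noncomputable def spinChar (m : ℕ) : LaurentPolynomial ℤ :=
  ∑ i ∈ range (m + 1), T (2 * i - m)

lemma actF_add (f g : ℤ →₀ ℤ) (m : ℕ) : actF (f + g) m = actF f m + actF g m :=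
  Finsupp.sum_add_index' (fun _ => zero_smul ℤ _) (fun _ _ _ => add_smul _ _ _)

lemma actF_single (a c : ℤ) (m : ℕ) : actF (Finsupp.single a c) m = c • actOn a m :=
  Finsupp.sum_single_index (zero_smul ℤ _)

lemma ofCoeff_actOn (n : ℤ) (m : ℕ) :
    (ofCoeff (actOn n m) : LaurentPolynomial ℤ) = T n * spinChar m := by
  simp only [actOn, spinChar, ofCoeff_sum, mul_sum, ← T_add]
  refine sum_congr rfl fun i _ => ?_
  rw [ofCoeff_single]
  exact congrArg T (by ring)

lemma ofCoeff_actF (f : ℤ →₀ ℤ) (m : ℕ) :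
    (ofCoeff (actF f m) : LaurentPolynomial ℤ) = ofCoeff f * spinChar m := by
  induction f using Finsupp.induction_linear with
  | zero => simp [actF]
  | add f g hf hg => rw [actF_add, ofCoeff_add, ofCoeff_add, hf, hg, add_mul]
  | single a c =>
    rw [actF_single, ofCoeff_smul, ofCoeff_actOn, ofCoeff_single, single_eq_C_mul_T,
      smul_eq_C_mul, mul_assoc]

lemma T_sub_T_neg_mul_spinChar (m : ℕ) :
    (T 1 - T (-1)) * spinChar m = T (m + 1) - T (-(m + 1)) := by
  have htelescope := sum_range_sub (fun i : ℕ => (T (2 * i - m - 1) : LaurentPolynomial ℤ)) (m + 1)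
  simp only [spinChar, mul_sum]
  convert htelescope using 1
  · refine sum_congr rfl fun i _ => ?_
    rw [sub_mul, ← T_add, ← T_add]
    push_cast
    congr 2 <;> ring
  · push_cast
    congr 2 <;> ring

lemma T_sub_T_neg_ne_zero : (T 1 - T (-1) : LaurentPolynomial ℤ) ≠ 0 := by
  rw [sub_ne_zero]
  intro h
  simpa using congrArg (fun p : LaurentPolynomial ℤ => AddMonoidAlgebra.coeff p 1) h

lemma spinChar_mul_spinChar_of_le {m m' : ℕ} (h : m ≤ m') :
    spinChar m * spinChar m' = ∑ i ∈ range (m + 1), spinChar (m' - m + 2 * i) := by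
  apply mul_left_cancel₀ T_sub_T_neg_ne_zero
  have hcast (i : ℕ) : ((m' - m + 2 * i : ℕ) : ℤ) = m' - m + 2 * i := by push_cast [h]; ring
  simp only [mul_left_comm _ (spinChar m), mul_sum, T_sub_T_neg_mul_spinChar, hcast]
  rw [mul_sub, sum_sub_distrib]
  simp only [spinChar, sum_mul, ← T_add]
  congr 1
  · refine sum_congr rfl fun i _ => congrArg T (by ring)
  · rw [← sum_range_reflect]
    refine sum_congr rfl fun i hi => congrArg T ?_
    rw [Nat.add_sub_cancel, Nat.cast_sub (Nat.le_of_lt_succ (mem_range.mp hi))]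
    ring

lemma spinChar_mul_spinChar (m m' : ℕ) :
    spinChar m * spinChar m' =
      ∑ i ∈ range (min m m' + 1), spinChar (m + m' - 2 * min m m' + 2 * i) := by
  rcases le_total m m' with h | h
  · rw [spinChar_mul_spinChar_of_le h, min_eq_left h]
    exact sum_congr rfl fun i _ => congrArg spinChar (by omega)
  · rw [mul_comm, spinChar_mul_spinChar_of_le h, min_eq_right h]
    exact sum_congr rfl fun i _ => congrArg spinChar (by omega)

/-- the prescription `[n]·[r] = Σ_{i=0}^{2r} [n − 2r + 2i]` makes the free
abelian group on `ℤ` a module over the fusion ring of `SU_q(2)`: the action is compatible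
with the `SU(2)` fusion rules `[r]·[s] = Σ_{t=|r−s|}^{r+s} [t]` (doubled spins `m = 2r`,
`m' = 2s`, `t` ranging over `m + m' - 2·min(m,m') + 2i`, `0 ≤ i ≤ min(m,m')`). -/
theorem stmt7 (n : ℤ) (m m' : ℕ) :
    actF (actOn n m) m' =
      ∑ i ∈ Finset.range (min m m' + 1), actOn n (m + m' - 2 * min m m' + 2 * i) := by
  apply (ofCoeff_injective : Function.Injective (ofCoeff : (ℤ →₀ ℤ) → LaurentPolynomial ℤ))
  rw [ofCoeff_actF, ofCoeff_actOn, mul_assoc, spinChar_mul_spinChar, ofCoeff_sum, mul_sum]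
  simp only [ofCoeff_actOn]
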